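/- Assume σ is a d-dimensional simplicial cone with linearly independent primitive generators v_1, …, v_d ∈ ℤ^d. Let B ⊆ σ^∨ ∩ ℤ^d be finite and nonempty with σ^∨ \ Q(B) bounded, let ∂Q(B) be the topological boundary of Q(B) in the subspace topology of σ^∨, and define the partial order u ≤_σ u′ on ∂Q(B) by ⟨u, v_j⟩ ≤ ⟨u′, v_j⟩ for all j = 1, …, d. If u ∈ ∂Q(B) is a maximal element with respect to ≤_σ, then for every j = 1, …, d there exists b ∈ B with u − b ∈ σ^∨ and ⟨u − b, v_j⟩ = 0. In particular, every such maximal element lies in ℚ^d, and the set of maximal elements of ∂Q(B) with respect to ≤_σ is finite. -/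

import Mathlib

/-!
In the coordinates `⟨·, v j⟩`, `σ^∨` is the positive orthant and `Q(B)` a finite union of
translated orthants. If a point `u` of `∂Q(B)` lies on the facet `⟨· - b, v j⟩ = 0` of no
translate `b + σ^∨` containing it, then moving `u` slightly up in the `j`-th coordinate keeps it
on `∂Q(B)`, so `u` is not maximal. Hence a maximal `u` is determined by a choice of `b_j ∈ B` for
each `j`, through the integer linear system `⟨u, v j⟩ = ⟨b_j, v j⟩`; this gives rationality and
finiteness.
-/

open Finset Filter Pointwise

noncomputable section

namespace Paper

variable {d n : ℕ}

/-- The standard inner product pairing on `ℝ^d`. -/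
def pair (u w : Fin d → ℝ) : ℝ := ∑ i, u i * w i

/-- The coercion `ℤ^d → ℝ^d`. -/
def toR (u : Fin d → ℤ) : Fin d → ℝ := fun i => (u i : ℝ)

/-- The cone generated by the integer vectors `v 1, …, v n`. -/
def cone (v : Fin n → Fin d → ℤ) : Set (Fin d → ℝ) :=
  {x | ∃ c : Fin n → ℝ, (∀ j, 0 ≤ c j) ∧ x = ∑ j, c j • toR (v j)}

/-- The dual cone `σ^∨ = {u | ⟨u, x⟩ ≥ 0 for all x ∈ σ}`. -/
def dualCone (v : Fin n → Fin d → ℤ) : Set (Fin d → ℝ) :=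
  {u | ∀ x ∈ cone v, 0 ≤ pair u x}

/-- Strong convexity of the cone generated by `v`. -/
def StronglyConvex (v : Fin n → Fin d → ℤ) : Prop :=
  ∀ x ∈ cone v, -x ∈ cone v → x = 0

/-- An integer vector is primitive if the gcd of its coordinates is 1. -/
def IsPrimitive (w : Fin d → ℤ) : Prop := Finset.univ.gcd w = 1

/-- The cone generated by `v` is `d`-dimensional. -/
def FullDim (v : Fin n → Fin d → ℤ) : Prop :=
  Submodule.span ℝ (Set.range fun j => toR (v j)) = ⊤

/-- The Newton polyhedron `P(A) = conv(A) + σ^∨`. -/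
def newton (v : Fin n → Fin d → ℤ) (A : Finset (Fin d → ℤ)) : Set (Fin d → ℝ) :=
  convexHull ℝ (toR '' ↑A) + dualCone v

/-- The set `Q(A) = ⋃_{a ∈ A} (a + σ^∨)`. -/
def QSet (v : Fin n → Fin d → ℤ) (A : Finset (Fin d → ℤ)) : Set (Fin d → ℝ) :=
  ⋃ a ∈ A, (toR a +ᵥ dualCone v)

/-- `λ_A(u) = sup {λ > 0 | u ∈ λ·P(A)}` (and `0` if no such `λ` exists;
note `Real.sSup` of the empty set is `0`). -/
def lam (v : Fin n → Fin d → ℤ) (A : Finset (Fin d → ℤ)) (u : Fin d → ℝ) : ℝ :=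
  sSup {l : ℝ | 0 < l ∧ u ∈ l • newton v A}

/-- `Q(m)` for the maximal monomial ideal, whose exponent set is
`(σ^∨ ∩ ℤ^d) \ {0}`. -/
def Qm (v : Fin n → Fin d → ℤ) : Set (Fin d → ℝ) :=
  ⋃ a ∈ {a : Fin d → ℤ | toR a ∈ dualCone v ∧ a ≠ 0}, (toR a +ᵥ dualCone v)

/-- The set `O = {u ∈ σ^∨ | ⟨u, v_j⟩ ≥ 1 for some j}`. -/
def OSet (v : Fin n → Fin d → ℤ) : Set (Fin d → ℝ) :=
  {u ∈ dualCone v | ∃ j, 1 ≤ pair u (toR (v j))}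


/-- The topological boundary of `s` inside `X`, with respect to the subspace
topology on `X`. -/
def boundaryIn (X s : Set (Fin d → ℝ)) : Set (Fin d → ℝ) :=
  X ∩ closure s ∩ closure (X \ s)

/-- The order `u ≤_σ u'` given by `⟨u, v_j⟩ ≤ ⟨u', v_j⟩` for all `j`. -/
def leSigma (v : Fin n → Fin d → ℤ) (u u' : Fin d → ℝ) : Prop :=
  ∀ j, pair u (toR (v j)) ≤ pair u' (toR (v j))

open Matrix Topology

lemma pair_eq_dotProduct (u w : Fin d → ℝ) : pair u w = u ⬝ᵥ w := rfl

lemma pair_add_left (x y w : Fin d → ℝ) : pair (x + y) w = pair x w + pair y w :=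
  add_dotProduct x y w

lemma pair_sub_left (x y w : Fin d → ℝ) : pair (x - y) w = pair x w - pair y w :=
  sub_dotProduct x y w

lemma pair_smul_left (c : ℝ) (x w : Fin d → ℝ) : pair (c • x) w = c * pair x w :=
  smul_dotProduct c x w

lemma continuous_pair_left (w : Fin d → ℝ) : Continuous fun u : Fin d → ℝ => pair u w := by
  unfold pair; fun_prop

lemma pair_toR (a w : Fin d → ℤ) : pair (toR a) (toR w) = ((a ⬝ᵥ w : ℤ) : ℝ) := by
  simp [pair, toR, dotProduct]

lemma mem_dualCone_iff {v : Fin n → Fin d → ℤ} {u : Fin d → ℝ} :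
    u ∈ dualCone v ↔ ∀ j, 0 ≤ pair u (toR (v j)) := by
  refine ⟨fun h j => h _ ⟨Pi.single j 1, fun i => ?_, ?_⟩, ?_⟩
  · by_cases hij : i = j <;> simp [hij]
  · simp [Pi.single_apply, ite_smul]
  · rintro h x ⟨c, hc, rfl⟩
    simp only [pair_eq_dotProduct, dotProduct_sum, dotProduct_smul, smul_eq_mul] at h ⊢
    exact Finset.sum_nonneg fun j _ => mul_nonneg (hc j) (h j)

lemma isClosed_dualCone (v : Fin n → Fin d → ℤ) : IsClosed (dualCone v) := by
  simp only [dualCone, Set.ofPred_forall]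
  exact isClosed_iInter fun x => isClosed_iInter fun _ =>
    isClosed_le continuous_const (continuous_pair_left x)

lemma mem_QSet {v : Fin n → Fin d → ℤ} {B : Finset (Fin d → ℤ)} {x : Fin d → ℝ} :
    x ∈ QSet v B ↔ ∃ b ∈ B, x - toR b ∈ dualCone v := by
  simp only [QSet, Set.mem_iUnion, exists_prop, Set.mem_vadd_set_iff_neg_vadd_mem,
    vadd_eq_add, neg_add_eq_sub]

lemma isClosed_QSet (v : Fin n → Fin d → ℤ) (B : Finset (Fin d → ℤ)) :
    IsClosed (QSet v B) :=
  B.finite_toSet.isClosed_biUnion fun b _ =>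
    (Homeomorph.addLeft (toR b)).isClosedMap _ (isClosed_dualCone v)

lemma mem_closure_of_eventually_mapsTo {X Y : Type*} [TopologicalSpace X] [TopologicalSpace Y]
    {f : X → Y} {x : X} {s : Set X} {t : Set Y} (hf : ContinuousAt f x) (hx : x ∈ closure s)
    (h : ∀ᶠ y in 𝓝 x, y ∈ s → f y ∈ t) : f x ∈ closure t :=
  mem_closure_of_frequently_of_tendsto ((mem_closure_iff_frequently.mp hx).mp h) hf

lemma eq_cast_inv_mulVec_of_map_mulVec_eq {ι : Type*} [Fintype ι] [DecidableEq ι]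
    {M : Matrix ι ι ℚ} (hM : IsUnit (M.map ((↑) : ℚ → ℝ))) {u : ι → ℝ} {c : ι → ℚ}
    (h : M.map (↑) *ᵥ u = fun i => (c i : ℝ)) : u = fun i => ((M⁻¹ *ᵥ c) i : ℝ) := by
  have hdet : IsUnit M.det := by
    rw [isUnit_iff_isUnit_det, ← Rat.coe_castHom, ← RingHom.mapMatrix_apply,
      ← RingHom.map_det, isUnit_iff_ne_zero, map_ne_zero] at hM
    exact hM.isUnit
  apply mulVec_injective_iff_isUnit.mpr hM
  funext i
  have := RingHom.map_mulVec (Rat.castHom ℝ) M (M⁻¹ *ᵥ c) i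
  rw [mulVec_mulVec, mul_nonsing_inv _ hdet, one_mulVec] at this
  simpa [h, Function.comp_def] using this

section Simplicial

variable {v : Fin d → Fin d → ℤ}

def rowMatrix (v : Fin d → Fin d → ℤ) : Matrix (Fin d) (Fin d) ℝ := Matrix.of fun j => toR (v j)

lemma rowMatrix_mulVec_apply (u : Fin d → ℝ) (j : Fin d) :
    (rowMatrix v *ᵥ u) j = pair u (toR (v j)) :=
  dotProduct_comm _ _

lemma isUnit_rowMatrix (hli : LinearIndependent ℝ fun j => toR (v j)) : IsUnit (rowMatrix v) :=
  linearIndependent_rows_iff_isUnit.mp hli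

lemma exists_pair_eq (hli : LinearIndependent ℝ fun j => toR (v j)) (c : Fin d → ℝ) :
    ∃ e : Fin d → ℝ, ∀ j, pair e (toR (v j)) = c j := by
  obtain ⟨e, he⟩ := mulVec_surjective_iff_isUnit.mpr (isUnit_rowMatrix hli) c
  exact ⟨e, fun j => by rw [← rowMatrix_mulVec_apply, he]⟩

def dualPoint (v : Fin d → Fin d → ℤ) (c : Fin d → ℤ) : Fin d → ℚ :=
  ((Matrix.of v).map (Int.cast : ℤ → ℚ))⁻¹ *ᵥ fun j => (c j : ℚ)

lemma eq_dualPoint_of_pair_eq (hli : LinearIndependent ℝ fun j => toR (v j)) {u : Fin d → ℝ}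
    {c : Fin d → ℤ} (h : ∀ j, pair u (toR (v j)) = c j) : u = fun i => (dualPoint v c i : ℝ) := by
  have hmap : ((Matrix.of v).map (Int.cast : ℤ → ℚ)).map ((↑) : ℚ → ℝ) = rowMatrix v := by
    ext; simp [rowMatrix, toR]
  refine eq_cast_inv_mulVec_of_map_mulVec_eq (hmap ▸ isUnit_rowMatrix hli) ?_
  funext j
  rw [hmap, rowMatrix_mulVec_apply, h]
  simp

variable {B : Finset (Fin d → ℤ)} {u : Fin d → ℝ} {e : Fin d → ℝ} {j : Fin d}

lemma pair_add_smul (he : ∀ i, pair e (toR (v i)) = (Pi.single j 1 : Fin d → ℝ) i)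
    (w : Fin d → ℝ) (t : ℝ) (i : Fin d) :
    pair (w + t • e) (toR (v i)) = pair w (toR (v i)) + t * (Pi.single j 1 : Fin d → ℝ) i := by
  rw [pair_add_left, pair_smul_left, he]

lemma add_smul_mem_dualCone (he : ∀ i, pair e (toR (v i)) = (Pi.single j 1 : Fin d → ℝ) i)
    {w : Fin d → ℝ} {t : ℝ} (ht : 0 ≤ t) (hw : w ∈ dualCone v) : w + t • e ∈ dualCone v := by
  refine mem_dualCone_iff.mpr fun i => ?_
  have := mem_dualCone_iff.mp hw i
  rw [pair_add_smul he]
  rcases eq_or_ne i j with rfl | hij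
  · simp only [Pi.single_eq_same]; linarith
  · simpa [hij] using this

lemma mem_dualCone_of_add_smul_mem (he : ∀ i, pair e (toR (v i)) = (Pi.single j 1 : Fin d → ℝ) i)
    {w : Fin d → ℝ} {t : ℝ} (hw : 0 < pair w (toR (v j))) (h : w + t • e ∈ dualCone v) :
    w ∈ dualCone v := by
  refine mem_dualCone_iff.mpr fun i => ?_
  rcases eq_or_ne i j with rfl | hij
  · exact hw.le
  · simpa [pair_add_smul he, hij] using mem_dualCone_iff.mp h i

/-- Translates `b + σ^∨` that contain `u` do so with slack in direction `v j`, and those that miss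
`u` also miss `u + t • e`; both properties persist near `u`, so shifting by `t • e` keeps points
near `u` inside `σ^∨ \ Q(B)`. -/
lemma eventually_add_smul_mem_diff
    (he : ∀ i, pair e (toR (v i)) = (Pi.single j 1 : Fin d → ℝ) i) {t : ℝ} (ht : 0 ≤ t)
    (hslack : ∀ b ∈ B, u - toR b ∈ dualCone v → pair (u - toR b) (toR (v j)) ≠ 0)
    (hmiss : ∀ b ∈ B, u - toR b ∉ dualCone v → u + t • e - toR b ∉ dualCone v) :
    ∀ᶠ w in 𝓝 u, w ∈ dualCone v \ QSet v B → w + t • e ∈ dualCone v \ QSet v B := by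
  have hstay : ∀ b ∈ B, ∀ᶠ w in 𝓝 u,
      w - toR b ∉ dualCone v → w + t • e - toR b ∉ dualCone v := by
    intro b hb
    by_cases hbD : u - toR b ∈ dualCone v
    · have hpos : 0 < pair (u - toR b) (toR (v j)) :=
        (mem_dualCone_iff.mp hbD j).lt_of_ne (hslack b hb hbD).symm
      have hcont : Continuous fun w => pair (w - toR b) (toR (v j)) :=
        (continuous_pair_left _).comp (continuous_id.sub continuous_const)
      filter_upwards [hcont.continuousAt.eventually (lt_mem_nhds hpos)] with w hw hwD hw'D
      rw [add_sub_right_comm] at hw'D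
      exact hwD (mem_dualCone_of_add_smul_mem he hw hw'D)
    · have hcont : Continuous fun w => w + t • e - toR b := by fun_prop
      have hb' : u + t • e - toR b ∈ (dualCone v)ᶜ := hmiss b hb hbD
      exact (hcont.continuousAt.eventually ((isClosed_dualCone v).isOpen_compl.mem_nhds hb')).mono
        fun _ h _ => h
  filter_upwards [(eventually_all_finset B).mpr hstay] with w hw ⟨hwD, hwQ⟩
  refine ⟨add_smul_mem_dualCone he ht hwD, fun hw'Q => ?_⟩
  obtain ⟨b, hb, hbD⟩ := mem_QSet.mp hw'Q
  exact hw b hb (fun h => hwQ (mem_QSet.mpr ⟨b, hb, h⟩)) hbD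

/-- Otherwise `u + t • e`, with `e` dual to `v j` and `t > 0` small, would be a strictly larger
point of `∂Q(B)`. -/
lemma exists_facet_of_maximal (hli : LinearIndependent ℝ fun j => toR (v j))
    (hu : u ∈ boundaryIn (dualCone v) (QSet v B))
    (hmax : ∀ u' ∈ boundaryIn (dualCone v) (QSet v B), leSigma v u u' → u' = u) (j : Fin d) :
    ∃ b ∈ B, u - toR b ∈ dualCone v ∧ pair (u - toR b) (toR (v j)) = 0 := by
  by_contra! hslack
  obtain ⟨⟨huD, huQ⟩, huC⟩ := hu
  rw [(isClosed_QSet v B).closure_eq] at huQ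
  obtain ⟨e, he⟩ := exists_pair_eq hli (Pi.single j 1)
  have hsmall : ∀ᶠ t in 𝓝 (0 : ℝ),
      ∀ b ∈ B, u - toR b ∉ dualCone v → u + t • e - toR b ∉ dualCone v := by
    refine (eventually_all_finset B).mpr fun b _ => ?_
    by_cases hb : u - toR b ∈ dualCone v
    · exact Eventually.of_forall fun _ h => absurd hb h
    · have hcont : Continuous fun t : ℝ => u + t • e - toR b := by fun_prop
      have hb' : (fun t : ℝ => u + t • e - toR b) 0 ∈ (dualCone v)ᶜ := by simpa using hb
      exact (hcont.continuousAt.eventually ((isClosed_dualCone v).isOpen_compl.mem_nhds hb')).mono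
        fun _ h _ => h
  obtain ⟨t, hmiss, ht : 0 < t⟩ :=
    ((hsmall.filter_mono nhdsWithin_le_nhds).and (self_mem_nhdsWithin (s := Set.Ioi 0))).exists
  have hu'Q : u + t • e ∈ QSet v B := by
    obtain ⟨b, hb, hbD⟩ := mem_QSet.mp huQ
    refine mem_QSet.mpr ⟨b, hb, ?_⟩
    simpa [add_sub_right_comm] using add_smul_mem_dualCone he ht.le hbD
  have hu'C : u + t • e ∈ closure (dualCone v \ QSet v B) :=
    mem_closure_of_eventually_mapsTo (f := (· + t • e)) (by fun_prop) huC
      (eventually_add_smul_mem_diff he ht.le hslack hmiss)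
  have hle : leSigma v u (u + t • e) := fun i => by
    rcases eq_or_ne i j with rfl | hij <;> simp [pair_add_smul he, *, ht.le]
  have hfix := congrArg (fun w => pair w (toR (v j)))
    (hmax _ ⟨⟨add_smul_mem_dualCone he ht.le huD, subset_closure hu'Q⟩, hu'C⟩ hle)
  simp only [pair_add_smul he, Pi.single_eq_same] at hfix
  linarith

lemma exists_eq_dualPoint_of_maximal (hli : LinearIndependent ℝ fun j => toR (v j))
    (hu : u ∈ boundaryIn (dualCone v) (QSet v B))
    (hmax : ∀ u' ∈ boundaryIn (dualCone v) (QSet v B), leSigma v u u' → u' = u) :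
    ∃ b : Fin d → B, u = fun i => (dualPoint v (fun j => (b j : Fin d → ℤ) ⬝ᵥ v j) i : ℝ) := by
  choose b hb hbD hfacet using exists_facet_of_maximal hli hu hmax
  refine ⟨fun j => ⟨b j, hb j⟩, eq_dualPoint_of_pair_eq hli fun j => ?_⟩
  rw [← pair_toR, ← sub_eq_zero, ← pair_sub_left]
  exact hfacet j

end Simplicial

theorem maximal_boundary_elements_general
    (d : ℕ)
    (v : Fin d → Fin d → ℤ)
    (hli : LinearIndependent ℝ fun j => toR (v j))
    (B : Finset (Fin d → ℤ)) :
    (∀ u ∈ boundaryIn (dualCone v) (QSet v B),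
      (∀ u' ∈ boundaryIn (dualCone v) (QSet v B), leSigma v u u' → u' = u) →
      (∀ j, ∃ b ∈ B, u - toR b ∈ dualCone v ∧ pair (u - toR b) (toR (v j)) = 0) ∧
      ∃ z : Fin d → ℚ, u = fun i => (z i : ℝ)) ∧
    {u | u ∈ boundaryIn (dualCone v) (QSet v B) ∧
      ∀ u' ∈ boundaryIn (dualCone v) (QSet v B), leSigma v u u' → u' = u}.Finite := by
  refine ⟨fun u hu hmax => ⟨exists_facet_of_maximal hli hu hmax, ?_⟩, ?_⟩
  · obtain ⟨_, hb⟩ := exists_eq_dualPoint_of_maximal hli hu hmax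
    exact ⟨_, hb⟩
  · refine (Set.finite_range fun b : Fin d → B =>
      fun i => (dualPoint v (fun j => (b j : Fin d → ℤ) ⬝ᵥ v j) i : ℝ)).subset ?_
    rintro u ⟨hu, hmax⟩
    obtain ⟨b, hb⟩ := exists_eq_dualPoint_of_maximal hli hu hmax
    exact ⟨b, hb.symm⟩

/-- every maximal element `u` of `∂Q(B)` with respect to `≤_σ`
satisfies: for each `j` there is `b ∈ B` with `u - b ∈ σ^∨` and
`⟨u - b, v_j⟩ = 0`; in particular any such `u` is rational, and the set of
maximal elements of `∂Q(B)` is finite. -/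
theorem maximal_boundary_elements
    (d : ℕ) (hd : 1 ≤ d)
    (v : Fin d → Fin d → ℤ)
    (hsc : StronglyConvex v) (hprim : ∀ j, IsPrimitive (v j))
    (hli : LinearIndependent ℝ fun j => toR (v j))
    (B : Finset (Fin d → ℤ)) (hBne : B.Nonempty)
    (hBl : ∀ b ∈ B, toR b ∈ dualCone v)
    (hbdd : Bornology.IsBounded (dualCone v \ QSet v B)) :
    (∀ u ∈ boundaryIn (dualCone v) (QSet v B),
      (∀ u' ∈ boundaryIn (dualCone v) (QSet v B), leSigma v u u' → u' = u) →
      (∀ j, ∃ b ∈ B, u - toR b ∈ dualCone v ∧ pair (u - toR b) (toR (v j)) = 0) ∧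
      ∃ z : Fin d → ℚ, u = fun i => (z i : ℝ)) ∧
    {u | u ∈ boundaryIn (dualCone v) (QSet v B) ∧
      ∀ u' ∈ boundaryIn (dualCone v) (QSet v B), leSigma v u u' → u' = u}.Finite :=
  maximal_boundary_elements_general d v hli B

end Paper
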